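/- One has ∫₀^{X} u(x)² dx ≤ (2 / sinh²(X/2)) · ∫₀^{X} u(x)² · sinh²(x) dx. -/

import Mathlib

/-!
On `[0, X]` the potential `b − h² cosh² x` is at least `b − h² cosh² X ≥ 1/2 > 0`, so
`(u u')' = u'² + (b − h² cosh²) u² ≥ 0`; since `u u'` vanishes at `0`, it stays nonnegative and
`u²` is nondecreasing. The mass of a nondecreasing function on `[0, X]` is at most twice its mass
on `[X/2, X]`, where the weight `sinh²` is at least `sinh²(X/2)`.
-/

open Set Real intervalIntegral

lemma monotoneOn_Icc_of_hasDerivWithinAt_nonneg {f f' : ℝ → ℝ} {a b : ℝ}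
    (hf : ∀ x ∈ Icc a b, HasDerivWithinAt f (f' x) (Icc a b) x)
    (hf' : ∀ x ∈ Ioo a b, 0 ≤ f' x) : MonotoneOn f (Icc a b) := by
  refine monotoneOn_of_hasDerivWithinAt_nonneg (convex_Icc a b)
    (fun x hx ↦ (hf x hx).continuousWithinAt) (fun x hx ↦ ?_) (by rwa [interior_Icc])
  rw [interior_Icc] at hx ⊢
  exact (hf x (Ioo_subset_Icc_self hx)).mono Ioo_subset_Icc_self

theorem monotoneOn_sq_of_mul_second_deriv_nonneg {u u' u'' : ℝ → ℝ} {a b : ℝ}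
    (hu' : ∀ x ∈ Icc a b, HasDerivWithinAt u (u' x) (Icc a b) x)
    (hu'' : ∀ x ∈ Icc a b, HasDerivWithinAt u' (u'' x) (Icc a b) x)
    (huu'' : ∀ x ∈ Ioo a b, 0 ≤ u x * u'' x) (ha : 0 ≤ u a * u' a) :
    MonotoneOn (fun x ↦ u x ^ 2) (Icc a b) := by
  have hmul : MonotoneOn (fun x ↦ u x * u' x) (Icc a b) :=
    monotoneOn_Icc_of_hasDerivWithinAt_nonneg (fun x hx ↦ (hu' x hx).mul (hu'' x hx))
      fun x hx ↦ by nlinarith [huu'' x hx, mul_self_nonneg (u' x)]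
  refine monotoneOn_Icc_of_hasDerivWithinAt_nonneg (f' := fun x ↦ 2 * (u x * u' x))
    (fun x hx ↦ by simpa [mul_assoc] using (hu' x hx).fun_pow 2) fun x hx ↦ ?_
  have hab : a ≤ b := hx.1.le.trans hx.2.le
  have := hmul (left_mem_Icc.2 hab) (Ioo_subset_Icc_self hx) hx.1.le
  linarith

theorem MonotoneOn.intervalIntegrable_of_le {f : ℝ → ℝ} {a b c d : ℝ}
    (hf : MonotoneOn f (Icc a b)) (hac : a ≤ c) (hcd : c ≤ d) (hdb : d ≤ b) :
    IntervalIntegrable f MeasureTheory.volume c d :=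
  (hf.mono (by rw [uIcc_of_le hcd]; exact Icc_subset_Icc hac hdb)).intervalIntegrable

theorem MonotoneOn.integral_le_two_mul_integral_upper_half {f : ℝ → ℝ} {a b : ℝ} (hab : a ≤ b)
    (hf : MonotoneOn f (Icc a b)) :
    ∫ x in a..b, f x ≤ 2 * ∫ x in (a + b) / 2..b, f x := by
  set m := (a + b) / 2 with hm
  have ham : a ≤ m := by linarith
  have hmb : m ≤ b := by linarith
  have hshift : ∫ x in a..m, f x ≤ ∫ x in m..b, f x := calc
    ∫ x in a..m, f x ≤ ∫ x in a..m, f (x + (m - a)) := by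
      refine integral_mono_on ham (hf.intervalIntegrable_of_le le_rfl ham hmb) ?_ fun x hx ↦ ?_
      · have h := (hf.intervalIntegrable_of_le ham hmb le_rfl).comp_add_right (m - a)
        simpa [show b - (m - a) = m by linarith] using h
      · exact hf ⟨hx.1, hx.2.trans hmb⟩ ⟨by linarith [hx.1], by linarith [hx.2]⟩ (by linarith)
    _ = ∫ x in m..b, f x := by
      rw [integral_comp_add_right]; congr 1 <;> linarith
  rw [← integral_add_adjacent_intervals (hf.intervalIntegrable_of_le le_rfl ham hmb)
    (hf.intervalIntegrable_of_le ham hmb le_rfl)]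
  linarith

theorem MonotoneOn.integral_le_div_mul_integral_mul {f w : ℝ → ℝ} {a b : ℝ} (hab : a ≤ b)
    (hf : MonotoneOn f (Icc a b)) (hf₀ : ∀ x ∈ Icc a b, 0 ≤ f x)
    (hw : MonotoneOn w (Icc a b)) (hw₀ : ∀ x ∈ Icc a b, 0 ≤ w x) (hwm : 0 < w ((a + b) / 2)) :
    ∫ x in a..b, f x ≤ 2 / w ((a + b) / 2) * ∫ x in a..b, f x * w x := by
  set m := (a + b) / 2 with hm
  have ham : a ≤ m := by linarith
  have hmb : m ≤ b := by linarith
  have hfw : MonotoneOn (fun x ↦ f x * w x) (Icc a b) := hf.mul hw hf₀ hw₀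
  have hupper : w m * ∫ x in m..b, f x ≤ ∫ x in m..b, f x * w x := by
    rw [← integral_const_mul]
    refine integral_mono_on hmb ((hf.intervalIntegrable_of_le ham hmb le_rfl).const_mul _)
      (hfw.intervalIntegrable_of_le ham hmb le_rfl) fun x hx ↦ ?_
    have hx' : x ∈ Icc a b := ⟨ham.trans hx.1, hx.2⟩
    rw [mul_comm]
    exact mul_le_mul_of_nonneg_left (hw ⟨ham, hmb⟩ hx' hx.1) (hf₀ x hx')
  have hlower : 0 ≤ ∫ x in a..m, f x * w x := integral_nonneg ham fun x hx ↦
    mul_nonneg (hf₀ x ⟨hx.1, hx.2.trans hmb⟩) (hw₀ x ⟨hx.1, hx.2.trans hmb⟩)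
  rw [← integral_add_adjacent_intervals (hfw.intervalIntegrable_of_le le_rfl ham hmb)
    (hfw.intervalIntegrable_of_le ham hmb le_rfl), div_mul_eq_mul_div, le_div_iff₀ hwm]
  nlinarith [hf.integral_le_two_mul_integral_upper_half hab]

theorem mathieu_sinh_weight_estimate_general
    (X : ℝ) (hX : 0 < X) (h b : ℝ)
    (u u' u'' : ℝ → ℝ)
    (hu' : ∀ x ∈ Set.Icc (0:ℝ) X, HasDerivWithinAt u (u' x) (Set.Icc 0 X) x)
    (hu'' : ∀ x ∈ Set.Icc (0:ℝ) X, HasDerivWithinAt u' (u'' x) (Set.Icc 0 X) x)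
    (hode : ∀ x ∈ Set.Icc (0:ℝ) X,
      -u'' x + (b - h ^ 2 * Real.cosh x ^ 2) * u x = 0)
    (hgap : b - h ^ 2 * Real.cosh X ^ 2 ≥ 1/2)
    (hbc : u 0 = 0 ∨ u' 0 = 0) :
    (∫ x in (0:ℝ)..X, u x ^ 2)
      ≤ (2 / Real.sinh (X/2) ^ 2) * ∫ x in (0:ℝ)..X, u x ^ 2 * Real.sinh x ^ 2 := by
  have hpot : ∀ x ∈ Icc 0 X, 0 ≤ b - h ^ 2 * cosh x ^ 2 := fun x hx ↦ by
    have : cosh x ^ 2 ≤ cosh X ^ 2 := pow_le_pow_left₀ (cosh_pos x).le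
      (cosh_le_cosh.2 (by rw [abs_of_nonneg hx.1, abs_of_pos hX]; exact hx.2)) 2
    nlinarith [mul_le_mul_of_nonneg_left this (sq_nonneg h)]
  have hu : MonotoneOn (fun x ↦ u x ^ 2) (Icc 0 X) := by
    refine monotoneOn_sq_of_mul_second_deriv_nonneg hu' hu'' (fun x hx ↦ ?_)
      (by rcases hbc with h0 | h0 <;> simp [h0])
    have hx := Ioo_subset_Icc_self hx
    have hu''x : u'' x = (b - h ^ 2 * cosh x ^ 2) * u x := by linarith [hode x hx]
    rw [hu''x]
    nlinarith [mul_nonneg (hpot x hx) (sq_nonneg (u x))]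
  have hsinh : MonotoneOn (fun x ↦ sinh x ^ 2) (Icc 0 X) := fun x hx y _ hxy ↦
    pow_le_pow_left₀ (sinh_nonneg_iff.2 hx.1) (sinh_le_sinh.2 hxy) 2
  simpa using hu.integral_le_div_mul_integral_mul hX.le (fun x _ ↦ sq_nonneg (u x)) hsinh
    (fun x _ ↦ sq_nonneg (sinh x)) (by simpa using pow_pos (sinh_pos_iff.2 (half_pos hX)) 2)

/-- For a radial Mathieu function `u` with `−u'' + (b − h² cosh²)u = 0` on `[0,X]`,
`b − h² cosh²(X) ≥ 1/2`, and Dirichlet or Neumann condition at `0`: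
`∫₀^X u² ≤ (2/sinh²(X/2)) ∫₀^X u² sinh²`. -/
theorem mathieu_sinh_weight_estimate
    (X : ℝ) (hX : 0 < X) (h b : ℝ)
    (u u' u'' : ℝ → ℝ)
    (hu' : ∀ x ∈ Set.Icc (0:ℝ) X, HasDerivWithinAt u (u' x) (Set.Icc 0 X) x)
    (hu'' : ∀ x ∈ Set.Icc (0:ℝ) X, HasDerivWithinAt u' (u'' x) (Set.Icc 0 X) x)
    (hu''cont : ContinuousOn u'' (Set.Icc 0 X))
    (hode : ∀ x ∈ Set.Icc (0:ℝ) X,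
      -u'' x + (b - h ^ 2 * Real.cosh x ^ 2) * u x = 0)
    (hgap : b - h ^ 2 * Real.cosh X ^ 2 ≥ 1/2)
    (hbc : u 0 = 0 ∨ u' 0 = 0) :
    (∫ x in (0:ℝ)..X, u x ^ 2)
      ≤ (2 / Real.sinh (X/2) ^ 2) * ∫ x in (0:ℝ)..X, u x ^ 2 * Real.sinh x ^ 2 :=
  mathieu_sinh_weight_estimate_general X hX h b u u' u'' hu' hu'' hode hgap hbc
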